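/- arXiv:1211.3308 — 7 statements merged into one kernel-verified Lean document; each statement's English description precedes it below -/
import Mathlib

section
/- Fix an integer n ≥ 1 and reals p₀ < p₁ < 0, Γ > 0, and g⟦ρ⟧ < 0. There exists λ > 0 satisfying the dispersion relation g⟦ρ⟧/n = Γ² coth(np₁/Γ) − λ² coth(n(p₁−p₀)/λ) if and only if g⟦ρ⟧/n − Γ² coth(np₁/Γ) < 0; moreover, when it exists, such λ (denoted λₙ*) is unique. -/
open Set

/-- The hyperbolic cotangent `coth t = cosh t / sinh t`. -/
noncomputable def coth (x : ℝ) : ℝ := Real.cosh x / Real.sinh x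

lemma sinh_pos' {x : ℝ} (hx : 0 < x) : 0 < Real.sinh x := Real.sinh_pos_iff.mpr hx

lemma one_lt_coth' {x : ℝ} (hx : 0 < x) : 1 < coth x := by
  have hs := sinh_pos' hx
  have h : Real.sinh x < Real.cosh x := by
    have := Real.cosh_sub_sinh x
    nlinarith [Real.exp_pos (-x)]
  rw [coth, lt_div_iff₀ hs, one_mul]
  exact h

lemma coth_pos' {x : ℝ} (hx : 0 < x) : 0 < coth x :=
  lt_trans one_pos (one_lt_coth' hx)

lemma coth_anti {s t : ℝ} (hs : 0 < s) (hst : s < t) : coth t < coth s := by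
  have hss := sinh_pos' hs
  have hts := sinh_pos' (hs.trans hst)
  rw [coth, coth, div_lt_div_iff₀ hts hss]
  have h := sinh_pos' (sub_pos.mpr hst)
  rw [Real.sinh_sub] at h
  nlinarith

lemma coth_anti_le {s t : ℝ} (hs : 0 < s) (hst : s ≤ t) : coth t ≤ coth s := by
  rcases eq_or_lt_of_le hst with rfl | h
  · exact le_refl _
  · exact (coth_anti hs h).le

lemma f_mono {a : ℝ} (ha : 0 < a) :
    StrictMonoOn (fun x : ℝ => x ^ 2 * coth (a / x)) (Ioi 0) := by
  intro x hx y hy hxy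
  simp only [mem_Ioi] at hx hy
  have h1 : a / y < a / x := div_lt_div_of_pos_left ha hx hxy
  have h2 : 0 < a / y := div_pos ha hy
  have h3 := coth_anti h2 h1
  have h4 : 0 < coth (a / x) := coth_pos' (div_pos ha hx)
  have h5 : x ^ 2 < y ^ 2 := by nlinarith
  simp only
  nlinarith

lemma f_contOn {a : ℝ} (ha : 0 < a) :
    ContinuousOn (fun x : ℝ => x ^ 2 * coth (a / x)) (Ioi 0) := by
  apply ContinuousOn.mul ((continuous_pow 2).continuousOn)
  unfold coth
  have hdiv : ContinuousOn (fun x : ℝ => a / x) (Ioi 0) :=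
    continuousOn_const.div continuousOn_id (fun x hx => ne_of_gt hx)
  apply ContinuousOn.div
  · exact Real.continuous_cosh.comp_continuousOn hdiv
  · exact Real.continuous_sinh.comp_continuousOn hdiv
  · exact fun x hx => ne_of_gt (sinh_pos' (div_pos ha hx))

lemma exists_root {a C : ℝ} (ha : 0 < a) (hC : 0 < C) :
    ∃ x : ℝ, 0 < x ∧ x ^ 2 * coth (a / x) = C := by
  have hK : 0 < coth a := coth_pos' ha
  have h2K : 0 < 2 * coth a := by linarith
  have hq : 0 < C / (2 * coth a) := div_pos hC h2K
  set x₁ : ℝ := min 1 (Real.sqrt (C / (2 * coth a))) with hx₁_def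
  have hx₁ : 0 < x₁ := lt_min one_pos (Real.sqrt_pos.mpr hq)
  have hfx₁ : x₁ ^ 2 * coth (a / x₁) < C := by
    have hle1 : x₁ ≤ 1 := min_le_left _ _
    have hle2 : x₁ ≤ Real.sqrt (C / (2 * coth a)) := min_le_right _ _
    have hsq : x₁ ^ 2 ≤ C / (2 * coth a) := by
      have h := Real.sq_sqrt hq.le
      nlinarith [Real.sqrt_nonneg (C / (2 * coth a))]
    have hcoth : coth (a / x₁) ≤ coth a := by
      apply coth_anti_le ha
      rw [le_div_iff₀ hx₁]
      nlinarith
    have hcpos : 0 < coth (a / x₁) := coth_pos' (div_pos ha hx₁)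
    have h1 : x₁ ^ 2 * coth (a / x₁) ≤ (C / (2 * coth a)) * coth a := by
      nlinarith [sq_nonneg x₁]
    have h2 : (C / (2 * coth a)) * coth a = C / 2 := by
      field_simp
    linarith
  set x₂ : ℝ := max x₁ (Real.sqrt C) with hx₂_def
  have hx₁₂ : x₁ ≤ x₂ := le_max_left _ _
  have hx₂ : 0 < x₂ := lt_of_lt_of_le hx₁ hx₁₂
  have hfx₂ : C < x₂ ^ 2 * coth (a / x₂) := by
    have h1 : Real.sqrt C ≤ x₂ := le_max_right _ _
    have hsq : C ≤ x₂ ^ 2 := by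
      have := Real.sq_sqrt hC.le
      nlinarith [Real.sqrt_nonneg C]
    have h2 : 1 < coth (a / x₂) := one_lt_coth' (div_pos ha hx₂)
    nlinarith [pow_pos hx₂ 2]
  have hsub : Icc x₁ x₂ ⊆ Ioi (0:ℝ) := fun x hx => lt_of_lt_of_le hx₁ hx.1
  have hcont : ContinuousOn (fun x : ℝ => x ^ 2 * coth (a / x)) (Icc x₁ x₂) :=
    (f_contOn ha).mono hsub
  obtain ⟨x, hxI, hx⟩ := intermediate_value_Icc hx₁₂ hcont ⟨hfx₁.le, hfx₂.le⟩
  exact ⟨x, lt_of_lt_of_le hx₁ hxI.1, hx⟩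

/-- **Solvability of the dispersion relation.**
Fix an integer `n ≥ 1`, `p₀ < p₁ < 0`, `Γ > 0` and `gρ < 0`. There exists
`λ > 0` with `gρ/n = Γ² coth(np₁/Γ) − λ² coth(n(p₁−p₀)/λ)` if and only if
`gρ/n − Γ² coth(np₁/Γ) < 0`, and such a `λ` is unique when it exists. -/
theorem stmt_3 (n : ℕ) (hn : 1 ≤ n) (p₀ p₁ Γ gρ : ℝ)
    (h₀₁ : p₀ < p₁) (h₁ : p₁ < 0) (hΓ : 0 < Γ) (hgρ : gρ < 0) :
    ((∃ lam > (0 : ℝ),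
        gρ / n = Γ ^ 2 * coth (n * p₁ / Γ) - lam ^ 2 * coth (n * (p₁ - p₀) / lam)) ↔
      gρ / n - Γ ^ 2 * coth (n * p₁ / Γ) < 0) ∧
    (∀ lam lam' : ℝ, 0 < lam → 0 < lam' →
      gρ / n = Γ ^ 2 * coth (n * p₁ / Γ) - lam ^ 2 * coth (n * (p₁ - p₀) / lam) →
      gρ / n = Γ ^ 2 * coth (n * p₁ / Γ) - lam' ^ 2 * coth (n * (p₁ - p₀) / lam') →
      lam = lam') := by
  have hn' : (0:ℝ) < n := by exact_mod_cast hn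
  have ha : 0 < (n : ℝ) * (p₁ - p₀) := mul_pos hn' (sub_pos.mpr h₀₁)
  have key : ∀ lam : ℝ,
      (gρ / n = Γ ^ 2 * coth (n * p₁ / Γ) - lam ^ 2 * coth (n * (p₁ - p₀) / lam)
        ↔ lam ^ 2 * coth (n * (p₁ - p₀) / lam)
            = Γ ^ 2 * coth (n * p₁ / Γ) - gρ / n) := by
    intro lam; constructor <;> intro h <;> linarith
  constructor
  · constructor
    · rintro ⟨lam, hlam, heq⟩
      have heq' := (key lam).mp heq
      have h1 : 0 < coth ((n : ℝ) * (p₁ - p₀) / lam) := coth_pos' (div_pos ha hlam)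
      nlinarith [pow_pos hlam 2]
    · intro h
      have hC : 0 < Γ ^ 2 * coth (n * p₁ / Γ) - gρ / n := by linarith
      obtain ⟨x, hx, hroot⟩ := exists_root ha hC
      exact ⟨x, hx, (key x).mpr hroot⟩
  · intro lam lam' hl hl' h h'
    have e1 := (key lam).mp h
    have e2 := (key lam').mp h'
    exact (f_mono ha).injOn (mem_Ioi.mpr hl) (mem_Ioi.mpr hl') (e1.trans e2.symm)
end

section
/- Fix an integer n ≥ 1 and reals p₀ < p₁ < 0, Γ > 0, λ > 0, g⟦ρ⟧ ∈ ℝ. There exists a solution M of problem (Pₙ) that is not identically zero if and only if the dispersion relation g⟦ρ⟧/n = Γ² coth(np₁/Γ) − λ² coth(n(p₁−p₀)/λ) holds. -/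
/-!
On a layer where `M'' = k² M` and `M` vanishes at the outer boundary point `e`, the Wronskians
of `M` with `sinh (k (p - e))` and with `cosh (k (p - e))` are constant, which forces
`k M(p) = M'(e) sinh (k (p - e))` and `M'(p) = k coth (k (p - e)) M(p)`. Applied on the water
layer `[p₀, p₁]` and the air layer `[p₁, 0]`, the jump condition becomes
`gρ M(p₁) = n (Γ² coth (n p₁ / Γ) - λ² coth (n (p₁ - p₀) / λ)) M(p₁)`. A nontrivial solution has
`M(p₁) ≠ 0`, since otherwise both Dirichlet problems force `M = 0`; conversely, when the dispersion
relation holds, two `sinh` profiles glued at `p₁` form a solution.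
-/

open Set

/-- A solution of problem (Pₙ): `M : [p₀,0] → ℝ` is continuous, twice continuously
differentiable on `[p₀,p₁]` and on `[p₁,0]`, satisfies `Γ²M″ = n²M` on `(p₁,0)`,
`λ²M″ = n²M` on `(p₀,p₁)`, `M(p₀) = M(0) = 0`, and the interface jump condition
`Γ³M′(p₁⁺) − λ³M′(p₁⁻) = gρ·M(p₁)` (with one-sided derivatives at `p₁`). -/
def IsPnSolution (n : ℕ) (p₀ p₁ Γ lam gρ : ℝ) (M : ℝ → ℝ) : Prop :=
  ContinuousOn M (Set.Icc p₀ 0) ∧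
  ContDiffOn ℝ 2 M (Set.Icc p₀ p₁) ∧
  ContDiffOn ℝ 2 M (Set.Icc p₁ 0) ∧
  (∀ p ∈ Set.Ioo p₁ 0, Γ ^ 2 * deriv (deriv M) p = (n : ℝ) ^ 2 * M p) ∧
  (∀ p ∈ Set.Ioo p₀ p₁, lam ^ 2 * deriv (deriv M) p = (n : ℝ) ^ 2 * M p) ∧
  M p₀ = 0 ∧ M 0 = 0 ∧
  Γ ^ 3 * derivWithin M (Set.Icc p₁ 0) p₁ - lam ^ 3 * derivWithin M (Set.Icc p₀ p₁) p₁
    = gρ * M p₁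

open Real Filter Topology

theorem eq_of_hasDerivAt_zero {F : ℝ → ℝ} {a b : ℝ} (hF : ContinuousOn F (Icc a b))
    (hF' : ∀ x ∈ Ioo a b, HasDerivAt F 0 x) {p q : ℝ} (hp : p ∈ Icc a b) (hq : q ∈ Icc a b) :
    F p = F q := by
  wlog hpq : p < q generalizing p q
  · rcases (not_lt.1 hpq).eq_or_lt with rfl | hqp
    · rfl
    · exact (this hq hp hqp).symm
  obtain ⟨c, -, hc⟩ := exists_hasDerivAt_eq_slope F (fun _ => 0) hpq
    (hF.mono (Icc_subset_Icc hp.1 hq.2))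
    (fun x hx => hF' x ⟨hp.1.trans_lt hx.1, hx.2.trans_le hq.2⟩)
  rw [eq_comm, div_eq_zero_iff, sub_eq_zero] at hc
  exact (hc.resolve_right (sub_ne_zero.2 hpq.ne')).symm

section Wronskian

variable {a b q : ℝ} {M : ℝ → ℝ}

theorem wronskian_eq (hab : a < b) (hM : ContDiffOn ℝ 2 M (Icc a b))
    (hODE : ∀ x ∈ Ioo a b, deriv (deriv M) x = q * M x) {φ φ' : ℝ → ℝ}
    (hφ : ∀ x, HasDerivAt φ (φ' x) x) (hφ' : ∀ x, HasDerivAt φ' (q * φ x) x)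
    {p r : ℝ} (hp : p ∈ Icc a b) (hr : r ∈ Icc a b) :
    derivWithin M (Icc a b) p * φ p - M p * φ' p
      = derivWithin M (Icc a b) r * φ r - M r * φ' r := by
  set D := derivWithin M (Icc a b)
  have hD : ContDiffOn ℝ 1 D (Icc a b) := hM.derivWithin (uniqueDiffOn_Icc hab) le_rfl
  refine eq_of_hasDerivAt_zero (F := fun x => D x * φ x - M x * φ' x) ?_ ?_ hp hr
  · exact (hD.continuousOn.mul (fun x _ => (hφ x).continuousAt.continuousWithinAt)).sub
      (hM.continuousOn.mul (fun x _ => (hφ' x).continuousAt.continuousWithinAt))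
  intro x hx
  have hIcc : Icc a b ∈ 𝓝 x := Icc_mem_nhds hx.1 hx.2
  have hDM : D =ᶠ[𝓝 x] deriv M := by
    filter_upwards [isOpen_Ioo.mem_nhds hx] with y hy
    exact derivWithin_of_mem_nhds (Icc_mem_nhds hy.1 hy.2)
  have hMx : HasDerivAt M (D x) x := by
    rw [hDM.eq_of_nhds]
    exact ((hM.differentiableOn two_ne_zero x (Ioo_subset_Icc_self hx)).differentiableAt
      hIcc).hasDerivAt
  have hDx : HasDerivAt D (q * M x) x := by
    rw [← hODE x hx, ← hDM.deriv_eq]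
    exact ((hD.differentiableOn one_ne_zero x (Ioo_subset_Icc_self hx)).differentiableAt
      hIcc).hasDerivAt
  exact ((hDx.mul (hφ x)).sub (hMx.mul (hφ' x))).congr_deriv (by ring)

end Wronskian

section SinhSolution

variable {a b k e : ℝ} {M : ℝ → ℝ}

theorem hasDerivAt_sinh_mul_sub (k e x : ℝ) :
    HasDerivAt (fun y => sinh (k * (y - e))) (k * cosh (k * (x - e))) x := by
  simpa [mul_comm] using
    (((hasDerivAt_id x).sub_const e).const_mul k).sinh

theorem hasDerivAt_cosh_mul_sub (k e x : ℝ) :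
    HasDerivAt (fun y => cosh (k * (y - e))) (k * sinh (k * (x - e))) x := by
  simpa [mul_comm] using
    (((hasDerivAt_id x).sub_const e).const_mul k).cosh

theorem deriv_deriv_const_mul_sinh (A k e x : ℝ) :
    deriv (deriv fun y => A * sinh (k * (y - e))) x = k ^ 2 * (A * sinh (k * (x - e))) := by
  have h₁ : deriv (fun y => A * sinh (k * (y - e))) = fun y => A * k * cosh (k * (y - e)) :=
    funext fun y => ((hasDerivAt_sinh_mul_sub k e y).const_mul A).deriv.trans (by ring)
  rw [h₁, ((hasDerivAt_cosh_mul_sub k e x).const_mul (A * k)).deriv]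
  ring

variable (hab : a < b) (hM : ContDiffOn ℝ 2 M (Icc a b))
  (hODE : ∀ x ∈ Ioo a b, deriv (deriv M) x = k ^ 2 * M x)
  (he : e ∈ Icc a b) (hMe : M e = 0)
include hab hM hODE he hMe

theorem derivWithin_mul_sinh_eq {p : ℝ} (hp : p ∈ Icc a b) :
    derivWithin M (Icc a b) p * sinh (k * (p - e)) = k * M p * cosh (k * (p - e)) := by
  have h := wronskian_eq hab hM hODE (hasDerivAt_sinh_mul_sub k e)
    (fun x => ((hasDerivAt_cosh_mul_sub k e x).const_mul k).congr_deriv (by ring)) hp he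
  simp only [sub_self, mul_zero, sinh_zero, hMe, zero_mul] at h
  linear_combination h

theorem mul_eq_derivWithin_mul_sinh {p : ℝ} (hp : p ∈ Icc a b) :
    k * M p = derivWithin M (Icc a b) e * sinh (k * (p - e)) := by
  have h := wronskian_eq hab hM hODE (hasDerivAt_cosh_mul_sub k e)
    (fun x => ((hasDerivAt_sinh_mul_sub k e x).const_mul k).congr_deriv (by ring)) hp he
  simp only [sub_self, mul_zero, cosh_zero, hMe, zero_mul, sub_zero, mul_one] at h
  linear_combination sinh (k * (p - e)) * h - cosh (k * (p - e)) *
    derivWithin_mul_sinh_eq hab hM hODE he hMe hp - k * M p * cosh_sq_sub_sinh_sq (k * (p - e))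

theorem derivWithin_eq_mul_coth_mul {p : ℝ} (hp : p ∈ Icc a b) (hk : k ≠ 0) (hpe : p ≠ e) :
    derivWithin M (Icc a b) p = k * coth (k * (p - e)) * M p := by
  have hs : sinh (k * (p - e)) ≠ 0 := sinh_ne_zero.2 (mul_ne_zero hk (sub_ne_zero.2 hpe))
  rw [coth]
  field_simp
  linear_combination derivWithin_mul_sinh_eq hab hM hODE he hMe hp

end SinhSolution

theorem eqOn_zero_of_deriv_deriv_eq {a b k : ℝ} {M : ℝ → ℝ} (hab : a < b)
    (hM : ContDiffOn ℝ 2 M (Icc a b)) (hODE : ∀ x ∈ Ioo a b, deriv (deriv M) x = k ^ 2 * M x)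
    (hk : k ≠ 0) (ha : M a = 0) (hb : M b = 0) : EqOn M 0 (Icc a b) := by
  have ha' : a ∈ Icc a b := left_mem_Icc.2 hab.le
  have hs : sinh (k * (b - a)) ≠ 0 := sinh_ne_zero.2 (mul_ne_zero hk (sub_ne_zero.2 hab.ne'))
  have hDa : derivWithin M (Icc a b) a = 0 := by
    have h := mul_eq_derivWithin_mul_sinh hab hM hODE ha' ha (right_mem_Icc.2 hab.le)
    rw [hb, mul_zero, eq_comm, mul_eq_zero] at h
    exact h.resolve_right hs
  intro p hp
  have h := mul_eq_derivWithin_mul_sinh hab hM hODE ha' ha hp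
  rw [hDa, zero_mul, mul_eq_zero] at h
  exact h.resolve_left hk

theorem sq_mul_eq_sq_mul_iff {c m x y : ℝ} (hc : c ≠ 0) :
    c ^ 2 * x = m ^ 2 * y ↔ x = (m / c) ^ 2 * y := by
  rw [div_pow, div_mul_eq_mul_div, eq_div_iff (pow_ne_zero 2 hc), mul_comm x]

section PnProblem

variable {n : ℕ} {p₀ p₁ Γ lam : ℝ} {M : ℝ → ℝ}

theorem interface_jump_eq (hn : n ≠ 0) (h₀₁ : p₀ < p₁) (h₁ : p₁ < 0) (hΓ : Γ ≠ 0)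
    (hlam : lam ≠ 0) (hwater : ContDiffOn ℝ 2 M (Icc p₀ p₁))
    (hair : ContDiffOn ℝ 2 M (Icc p₁ 0))
    (hodeAir : ∀ p ∈ Ioo p₁ 0, Γ ^ 2 * deriv (deriv M) p = (n : ℝ) ^ 2 * M p)
    (hodeWater : ∀ p ∈ Ioo p₀ p₁, lam ^ 2 * deriv (deriv M) p = (n : ℝ) ^ 2 * M p)
    (hM₀ : M p₀ = 0) (hM0 : M 0 = 0) :
    Γ ^ 3 * derivWithin M (Icc p₁ 0) p₁ - lam ^ 3 * derivWithin M (Icc p₀ p₁) p₁ =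
      n * (Γ ^ 2 * coth (n * p₁ / Γ) - lam ^ 2 * coth (n * (p₁ - p₀) / lam)) * M p₁ := by
  have hn' : (n : ℝ) ≠ 0 := Nat.cast_ne_zero.2 hn
  rw [derivWithin_eq_mul_coth_mul h₁ hair
      (fun p hp => (sq_mul_eq_sq_mul_iff hΓ).1 (hodeAir p hp)) (right_mem_Icc.2 h₁.le) hM0
      (left_mem_Icc.2 h₁.le) (div_ne_zero hn' hΓ) h₁.ne,
    derivWithin_eq_mul_coth_mul h₀₁ hwater
      (fun p hp => (sq_mul_eq_sq_mul_iff hlam).1 (hodeWater p hp)) (left_mem_Icc.2 h₀₁.le)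
      hM₀ (right_mem_Icc.2 h₀₁.le) (div_ne_zero hn' hlam) h₀₁.ne',
    div_mul_eq_mul_div, div_mul_eq_mul_div, sub_zero]
  field_simp

theorem IsPnSolution.eqOn_zero_of_interface_eq_zero {gρ : ℝ}
    (hM : IsPnSolution n p₀ p₁ Γ lam gρ M) (hn : n ≠ 0) (h₀₁ : p₀ < p₁) (h₁ : p₁ < 0)
    (hΓ : Γ ≠ 0) (hlam : lam ≠ 0) (hM₁ : M p₁ = 0) :
    EqOn M 0 (Icc p₀ 0) := by
  obtain ⟨-, hwater, hair, hodeAir, hodeWater, hM₀, hM0, -⟩ := hM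
  have hn' : (n : ℝ) ≠ 0 := Nat.cast_ne_zero.2 hn
  rw [← Icc_union_Icc_eq_Icc h₀₁.le h₁.le]
  exact (eqOn_zero_of_deriv_deriv_eq h₀₁ hwater
      (fun p hp => (sq_mul_eq_sq_mul_iff hlam).1 (hodeWater p hp))
      (div_ne_zero hn' hlam) hM₀ hM₁).union
    (eqOn_zero_of_deriv_deriv_eq h₁ hair
      (fun p hp => (sq_mul_eq_sq_mul_iff hΓ).1 (hodeAir p hp))
      (div_ne_zero hn' hΓ) hM₁ hM0)

-- The amplitudes are crossed so that the two layers agree at `p₁`.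
noncomputable def pnMode (n : ℕ) (p₀ p₁ Γ lam : ℝ) (p : ℝ) : ℝ :=
  if p ≤ p₁ then sinh (n / Γ * p₁) * sinh (n / lam * (p - p₀))
  else sinh (n / lam * (p₁ - p₀)) * sinh (n / Γ * p)

theorem pnMode_interface_ne_zero (hn : n ≠ 0) (h₀₁ : p₀ < p₁) (h₁ : p₁ < 0) (hΓ : Γ ≠ 0)
    (hlam : lam ≠ 0) : pnMode n p₀ p₁ Γ lam p₁ ≠ 0 := by
  have hn' : (n : ℝ) ≠ 0 := Nat.cast_ne_zero.2 hn
  rw [pnMode, if_pos le_rfl]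
  exact mul_ne_zero (sinh_ne_zero.2 (mul_ne_zero (div_ne_zero hn' hΓ) h₁.ne))
    (sinh_ne_zero.2 (mul_ne_zero (div_ne_zero hn' hlam) (sub_ne_zero.2 h₀₁.ne')))

theorem isPnSolution_pnMode {gρ : ℝ} (hn : n ≠ 0) (h₀₁ : p₀ < p₁) (h₁ : p₁ < 0)
    (hΓ : Γ ≠ 0) (hlam : lam ≠ 0)
    (hdisp : gρ / n = Γ ^ 2 * coth (n * p₁ / Γ) - lam ^ 2 * coth (n * (p₁ - p₀) / lam)) :
    IsPnSolution n p₀ p₁ Γ lam gρ (pnMode n p₀ p₁ Γ lam) := by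
  set M := pnMode n p₀ p₁ Γ lam
  set water := fun p => sinh (n / Γ * p₁) * sinh (n / lam * (p - p₀))
  set air := fun p => sinh (n / lam * (p₁ - p₀)) * sinh (n / Γ * p)
  have hwater : EqOn M water (Icc p₀ p₁) := fun p hp => if_pos hp.2
  have hair : EqOn M air (Icc p₁ 0) := by
    rintro p ⟨hp, -⟩
    rcases hp.eq_or_lt with rfl | hp
    · exact (if_pos le_rfl).trans (mul_comm _ _)
    · exact if_neg hp.not_ge
  have hwaterC : ContDiffOn ℝ 2 M (Icc p₀ p₁) :=
    (show ContDiff ℝ 2 water by fun_prop).contDiffOn.congr hwater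
  have hairC : ContDiffOn ℝ 2 M (Icc p₁ 0) :=
    (show ContDiff ℝ 2 air by fun_prop).contDiffOn.congr hair
  have hodeAir : ∀ p ∈ Ioo p₁ 0, Γ ^ 2 * deriv (deriv M) p = (n : ℝ) ^ 2 * M p := by
    intro p hp
    have hev : M =ᶠ[𝓝 p] air :=
      eventually_of_mem (isOpen_Ioi.mem_nhds hp.1) fun q hq => if_neg (not_le.2 hq)
    rw [sq_mul_eq_sq_mul_iff hΓ, hev.deriv.deriv_eq, hev.eq_of_nhds]
    simpa only [sub_zero] using deriv_deriv_const_mul_sinh _ (n / Γ) 0 p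
  have hodeWater : ∀ p ∈ Ioo p₀ p₁, lam ^ 2 * deriv (deriv M) p = (n : ℝ) ^ 2 * M p := by
    intro p hp
    have hev : M =ᶠ[𝓝 p] water :=
      eventually_of_mem (isOpen_Iio.mem_nhds hp.2) fun q hq => if_pos hq.le
    rw [sq_mul_eq_sq_mul_iff hlam, hev.deriv.deriv_eq, hev.eq_of_nhds]
    exact deriv_deriv_const_mul_sinh _ _ _ p
  have hM₀ : M p₀ = 0 := by simp [M, pnMode, h₀₁.le]
  have hM0 : M 0 = 0 := by simp [M, pnMode, h₁.not_ge]
  refine ⟨?_, hwaterC, hairC, hodeAir, hodeWater, hM₀, hM0, ?_⟩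
  · rw [← Icc_union_Icc_eq_Icc h₀₁.le h₁.le]
    exact hwaterC.continuousOn.union_of_isClosed hairC.continuousOn isClosed_Icc isClosed_Icc
  · rw [interface_jump_eq hn h₀₁ h₁ hΓ hlam hwaterC hairC hodeAir hodeWater hM₀ hM0, ← hdisp]
    field_simp

end PnProblem

/-- **Nontrivial solvability of (Pₙ) characterizes the dispersion relation.**
For `n ≥ 1`, `p₀ < p₁ < 0`, `Γ > 0`, `λ > 0` and `gρ ∈ ℝ`, problem (Pₙ) admits a
solution that is not identically zero if and only if
`gρ/n = Γ² coth(np₁/Γ) − λ² coth(n(p₁−p₀)/λ)`. -/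
theorem stmt_4 (n : ℕ) (hn : 1 ≤ n) (p₀ p₁ Γ lam gρ : ℝ)
    (h₀₁ : p₀ < p₁) (h₁ : p₁ < 0) (hΓ : 0 < Γ) (hlam : 0 < lam) :
    (∃ M : ℝ → ℝ, IsPnSolution n p₀ p₁ Γ lam gρ M ∧ ¬(∀ p ∈ Set.Icc p₀ 0, M p = 0)) ↔
      gρ / n = Γ ^ 2 * coth (n * p₁ / Γ) - lam ^ 2 * coth (n * (p₁ - p₀) / lam) := by
  replace hn : n ≠ 0 := Nat.one_le_iff_ne_zero.1 hn
  replace hΓ := hΓ.ne'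
  replace hlam := hlam.ne'
  constructor
  · rintro ⟨M, hM, hnontriv⟩
    have hM₁ : M p₁ ≠ 0 := fun h =>
      hnontriv (hM.eqOn_zero_of_interface_eq_zero hn h₀₁ h₁ hΓ hlam h)
    obtain ⟨-, hwater, hair, hodeAir, hodeWater, hM₀, hM0, hjump⟩ := hM
    rw [interface_jump_eq hn h₀₁ h₁ hΓ hlam hwater hair hodeAir hodeWater hM₀ hM0] at hjump
    rw [← mul_right_cancel₀ hM₁ hjump]
    field_simp
  · intro hdisp
    exact ⟨pnMode n p₀ p₁ Γ lam, isPnSolution_pnMode hn h₀₁ h₁ hΓ hlam hdisp,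
      fun h => pnMode_interface_ne_zero hn h₀₁ h₁ hΓ hlam (h p₁ ⟨h₀₁.le, h₁.le⟩)⟩
end

section
/- Fix reals p₀ < p₁ < 0, Γ > 0, λ > 0, and g⟦ρ⟧ < 0. Consider the zero-mode problem (P₀): find M : [p₀,0] → ℝ continuous, twice continuously differentiable on [p₀,p₁] and on [p₁,0], with M″ = 0 on (p₀,p₁) and on (p₁,0), M(p₀) = 0, M(0) = M(p₁), and Γ³M′(p₁⁺) − λ³M′(p₁⁻) = g⟦ρ⟧M(p₁). Then (P₀) has a solution that is not identically zero if and only if λ³ = −g⟦ρ⟧(p₁−p₀). -/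
/-!
Each piece of a solution is affine, `M'` being constant on the open interval and the mean value
theorem carrying this to the closed one. The lid condition `M(0) = M(p₁)` makes `M` constant on
`[p₁, 0]`, and `M(p₀) = 0` makes it `c (p - p₀)` on `[p₀, p₁]`. The jump condition then reads
`-λ³ c = gρ c (p₁ - p₀)`, which has a solution `c ≠ 0` exactly when `λ³ = -gρ (p₁ - p₀)`; the
witness is then `p ↦ min (p - p₀) (p₁ - p₀)`.
-/

open Set Filter Topology

lemma eqOn_affine_of_deriv_eq {f : ℝ → ℝ} {a b c : ℝ}
    (hfc : ContinuousOn f (Icc a b)) (hfd : DifferentiableOn ℝ f (Ioo a b))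
    (hf' : ∀ x ∈ Ioo a b, deriv f x = c) :
    EqOn f (fun x => f a + c * (x - a)) (Icc a b) := by
  rintro x ⟨hax, hxb⟩
  rcases hax.eq_or_lt with rfl | hax
  · simp
  obtain ⟨ξ, hξ, hslope⟩ := exists_deriv_eq_slope f hax
    (hfc.mono (Icc_subset_Icc_right hxb)) (hfd.mono (Ioo_subset_Ioo_right hxb))
  rw [hf' ξ (Ioo_subset_Ioo_right hxb hξ), eq_div_iff (sub_ne_zero.2 hax.ne')] at hslope
  simp only
  linarith

lemma exists_eqOn_affine_of_deriv_deriv_eq_zero {f : ℝ → ℝ} {a b : ℝ}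
    (hf : ContDiffOn ℝ 2 f (Icc a b)) (hf'' : ∀ x ∈ Ioo a b, deriv (deriv f) x = 0) :
    ∃ c, EqOn f (fun x => f a + c * (x - a)) (Icc a b) := by
  have hfo : ContDiffOn ℝ 2 f (Ioo a b) := hf.mono Ioo_subset_Icc_self
  have hf' : DifferentiableOn ℝ (deriv f) (Ioo a b) :=
    (hfo.deriv_of_isOpen isOpen_Ioo (m := 1) (by norm_num)).differentiableOn one_ne_zero
  obtain ⟨c, hc⟩ := isOpen_Ioo.exists_is_const_of_deriv_eq_zero isPreconnected_Ioo hf' hf''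
  exact ⟨c, eqOn_affine_of_deriv_eq hf.continuousOn (hfo.differentiableOn two_ne_zero) hc⟩

lemma derivWithin_Icc_of_eqOn_affine {f : ℝ → ℝ} {a b x d c x₀ : ℝ} (hab : a < b)
    (hx : x ∈ Icc a b) (hf : EqOn f (fun y => d + c * (y - x₀)) (Icc a b)) :
    derivWithin f (Icc a b) x = c := by
  have haff : HasDerivWithinAt (fun y => d + c * (y - x₀)) c (Icc a b) x := by
    simpa using ((((hasDerivAt_id x).sub_const x₀).const_mul c).const_add d).hasDerivWithinAt
  exact (haff.congr_of_mem hf hx).derivWithin (uniqueDiffOn_Icc hab x hx)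

lemma deriv_deriv_eq_zero_of_eqOn_affine {f : ℝ → ℝ} {s : Set ℝ} {x d c x₀ : ℝ}
    (hs : IsOpen s) (hx : x ∈ s) (hf : EqOn f (fun y => d + c * (y - x₀)) s) :
    deriv (deriv f) x = 0 := by
  have hderiv : deriv f =ᶠ[𝓝 x] fun _ => c := by
    filter_upwards [hs.mem_nhds hx] with y hy
    rw [(hf.eventuallyEq_of_mem (hs.mem_nhds hy)).deriv_eq]
    simp
  rw [hderiv.deriv_eq, deriv_const]

theorem stmt_6_general (p₀ p₁ Γ lam gρ : ℝ)
    (h₀₁ : p₀ < p₁) (h₁ : p₁ < 0) :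
    (∃ M : ℝ → ℝ,
      (ContinuousOn M (Set.Icc p₀ 0) ∧
        ContDiffOn ℝ 2 M (Set.Icc p₀ p₁) ∧
        ContDiffOn ℝ 2 M (Set.Icc p₁ 0) ∧
        (∀ p ∈ Set.Ioo p₀ p₁, deriv (deriv M) p = 0) ∧
        (∀ p ∈ Set.Ioo p₁ 0, deriv (deriv M) p = 0) ∧
        M p₀ = 0 ∧ M 0 = M p₁ ∧
        Γ ^ 3 * derivWithin M (Set.Icc p₁ 0) p₁
          - lam ^ 3 * derivWithin M (Set.Icc p₀ p₁) p₁ = gρ * M p₁) ∧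
      ¬(∀ p ∈ Set.Icc p₀ 0, M p = 0)) ↔
    lam ^ 3 = -gρ * (p₁ - p₀) := by
  have hp₁l : p₁ ∈ Icc p₀ p₁ := right_mem_Icc.2 h₀₁.le
  have hp₁r : p₁ ∈ Icc p₁ 0 := left_mem_Icc.2 h₁.le
  constructor
  · rintro ⟨M, ⟨-, hl, hr, hl'', hr'', hMp₀, htop, hjump⟩, hne⟩
    obtain ⟨c₁, hc₁⟩ := exists_eqOn_affine_of_deriv_deriv_eq_zero hl hl''
    obtain ⟨c₂, hc₂⟩ := exists_eqOn_affine_of_deriv_deriv_eq_zero hr hr''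
    have hc₂0 : c₂ = 0 := by
      have h0 : c₂ * p₁ = 0 := by
        have := hc₂ (right_mem_Icc.2 h₁.le)
        simp only [htop] at this
        linarith
      exact (mul_eq_zero.1 h0).resolve_right h₁.ne
    have hc₁0 : c₁ ≠ 0 := by
      rintro rfl
      refine hne fun p hp => ?_
      rcases le_total p p₁ with h | h
      · simpa [hMp₀] using hc₁ ⟨hp.1, h⟩
      · rw [hc₂ ⟨h, hp.2⟩, hc₁ hp₁l]
        simp [hc₂0, hMp₀]
    rw [derivWithin_Icc_of_eqOn_affine h₁ hp₁r hc₂, derivWithin_Icc_of_eqOn_affine h₀₁ hp₁l hc₁,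
      hc₁ hp₁l, hMp₀, hc₂0] at hjump
    exact mul_right_cancel₀ hc₁0 (by linear_combination -hjump)
  · intro hlam
    set M : ℝ → ℝ := fun p => min (p - p₀) (p₁ - p₀)
    have hl : EqOn M (fun p => 0 + 1 * (p - p₀)) (Icc p₀ p₁) := fun p hp => by
      simp [M, hp.2]
    have hr : EqOn M (fun p => (p₁ - p₀) + 0 * (p - p₁)) (Icc p₁ 0) := fun p hp => by
      simp [M, hp.1]
    refine ⟨M, ⟨by fun_prop, (by fun_prop : ContDiff ℝ 2 _).contDiffOn.congr hl,
      (by fun_prop : ContDiff ℝ 2 _).contDiffOn.congr hr,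
      fun p hp => deriv_deriv_eq_zero_of_eqOn_affine isOpen_Ioo hp (hl.mono Ioo_subset_Icc_self),
      fun p hp => deriv_deriv_eq_zero_of_eqOn_affine isOpen_Ioo hp (hr.mono Ioo_subset_Icc_self),
      by simp [M, h₀₁.le], by simp [M, h₁.le], ?_⟩, fun h => ?_⟩
    · rw [derivWithin_Icc_of_eqOn_affine h₁ hp₁r hr, derivWithin_Icc_of_eqOn_affine h₀₁ hp₁l hl,
        hl hp₁l, hlam]
      ring
    · simpa [M, sub_eq_zero, h₀₁.ne'] using h p₁ ⟨h₀₁.le, h₁.le⟩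

/-- **The zero-mode problem (P₀).**
For `p₀ < p₁ < 0`, `Γ > 0`, `λ > 0` and `gρ < 0`: the problem of finding
`M : [p₀,0] → ℝ` continuous, twice continuously differentiable on `[p₀,p₁]` and
on `[p₁,0]`, with `M″ = 0` on `(p₀,p₁)` and on `(p₁,0)`, `M(p₀) = 0`,
`M(0) = M(p₁)` and `Γ³M′(p₁⁺) − λ³M′(p₁⁻) = gρ·M(p₁)` has a solution that is not
identically zero if and only if `λ³ = −gρ(p₁−p₀)`. -/
theorem stmt_6 (p₀ p₁ Γ lam gρ : ℝ)
    (h₀₁ : p₀ < p₁) (h₁ : p₁ < 0) (hΓ : 0 < Γ) (hlam : 0 < lam) (hgρ : gρ < 0) :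
    (∃ M : ℝ → ℝ,
      (ContinuousOn M (Set.Icc p₀ 0) ∧
        ContDiffOn ℝ 2 M (Set.Icc p₀ p₁) ∧
        ContDiffOn ℝ 2 M (Set.Icc p₁ 0) ∧
        (∀ p ∈ Set.Ioo p₀ p₁, deriv (deriv M) p = 0) ∧
        (∀ p ∈ Set.Ioo p₁ 0, deriv (deriv M) p = 0) ∧
        M p₀ = 0 ∧ M 0 = M p₁ ∧
        Γ ^ 3 * derivWithin M (Set.Icc p₁ 0) p₁
          - lam ^ 3 * derivWithin M (Set.Icc p₀ p₁) p₁ = gρ * M p₁) ∧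
      ¬(∀ p ∈ Set.Icc p₀ 0, M p = 0)) ↔
    lam ^ 3 = -gρ * (p₁ - p₀) :=
  stmt_6_general p₀ p₁ Γ lam gρ h₀₁ h₁
end

section
/- Fix an integer n ≥ 1 and reals p₀ < p₁ < 0, Γ > 0, g⟦ρ⟧ < 0. If λ > 0 satisfies the dispersion relation g⟦ρ⟧/n = Γ² coth(np₁/Γ) − λ² coth(n(p₁−p₀)/λ), then λ³ ≠ −g⟦ρ⟧(p₁−p₀). In other words, the bifurcation value λₙ* never coincides with λ₀ = (−g⟦ρ⟧(p₁−p₀))^{1/3}, the unique critical point of the laminar Bernoulli function Q(λ) = 2g⟦ρ⟧(p₁−p₀)/λ + Γ² − λ²; hence Q is locally invertible near λₙ*. -/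
open Set

lemma sinh_lt_mul_cosh {t : ℝ} (ht : 0 < t) : Real.sinh t < t * Real.cosh t := by
  have hmono : StrictMonoOn (fun x => x * Real.cosh x - Real.sinh x) (Ici 0) := by
    refine strictMonoOn_of_deriv_pos (convex_Ici 0) ?_ ?_
    · fun_prop
    · intro x hx
      rw [interior_Ici] at hx
      have hd : HasDerivAt (fun x => x * Real.cosh x - Real.sinh x)
          (1 * Real.cosh x + x * Real.sinh x - Real.cosh x) x :=
        ((hasDerivAt_id x).mul (Real.hasDerivAt_cosh x)).sub (Real.hasDerivAt_sinh x)
      rw [hd.deriv]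
      have hs := Real.sinh_pos_iff.mpr hx
      nlinarith [mul_pos (mem_Ioi.mp hx) hs]
  have := hmono (self_mem_Ici) (le_of_lt ht : (0:ℝ) ≤ t) ht
  simpa using this

lemma coth_neg_of_neg {t : ℝ} (ht : t < 0) : coth t < 0 := by
  unfold coth
  exact div_neg_of_pos_of_neg (Real.cosh_pos t) (Real.sinh_neg_iff.mpr ht)

lemma one_div_lt_coth {t : ℝ} (ht : 0 < t) : 1 / t < coth t := by
  unfold coth
  rw [div_lt_div_iff₀ ht (Real.sinh_pos_iff.mpr ht)]
  have := sinh_lt_mul_cosh ht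
  nlinarith

/-- **The bifurcation value avoids the critical point of `Q`.**
If `λ > 0` satisfies the dispersion relation
`gρ/n = Γ² coth(np₁/Γ) − λ² coth(n(p₁−p₀)/λ)` (with `n ≥ 1`, `p₀ < p₁ < 0`,
`Γ > 0`, `gρ < 0`), then `λ³ ≠ −gρ(p₁−p₀)`, i.e. `λ` is not the unique critical
point of `Q(λ) = 2gρ(p₁−p₀)/λ + Γ² − λ²`; in particular `Q′(λ) ≠ 0`, so `Q` is
locally invertible near `λ`. -/
theorem stmt_7 (n : ℕ) (hn : 1 ≤ n) (p₀ p₁ Γ gρ lam : ℝ)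
    (h₀₁ : p₀ < p₁) (h₁ : p₁ < 0) (hΓ : 0 < Γ) (hgρ : gρ < 0) (hlam : 0 < lam)
    (hdisp : gρ / n = Γ ^ 2 * coth (n * p₁ / Γ) - lam ^ 2 * coth (n * (p₁ - p₀) / lam))
    (Q : ℝ → ℝ) (hQ : ∀ l, Q l = 2 * gρ * (p₁ - p₀) / l + Γ ^ 2 - l ^ 2) :
    lam ^ 3 ≠ -gρ * (p₁ - p₀) ∧ deriv Q lam ≠ 0 := by
  have hn' : (0:ℝ) < n := by exact_mod_cast Nat.lt_of_lt_of_le Nat.zero_lt_one hn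
  have hΔ : (0:ℝ) < p₁ - p₀ := sub_pos.mpr h₀₁
  -- coth at the negative argument is negative
  have ht₁ : (n:ℝ) * p₁ / Γ < 0 := div_neg_of_neg_of_pos (mul_neg_of_pos_of_neg hn' h₁) hΓ
  have hc₁ : coth ((n:ℝ) * p₁ / Γ) < 0 := coth_neg_of_neg ht₁
  -- coth at the positive argument exceeds its reciprocal
  have ht₂ : (0:ℝ) < n * (p₁ - p₀) / lam := div_pos (mul_pos hn' hΔ) hlam
  have hc₂ : 1 / ((n:ℝ) * (p₁ - p₀) / lam) < coth ((n:ℝ) * (p₁ - p₀) / lam) :=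
    one_div_lt_coth ht₂
  have hrec : 1 / ((n:ℝ) * (p₁ - p₀) / lam) = lam / ((n:ℝ) * (p₁ - p₀)) := by
    rw [one_div_div]
  rw [hrec] at hc₂
  -- key strict inequality: lam ^ 3 < -gρ * (p₁ - p₀)
  have hkey : lam ^ 3 < -gρ * (p₁ - p₀) := by
    have h2 : gρ / n < - lam ^ 2 * (lam / ((n:ℝ) * (p₁ - p₀))) := by
      have hΓ2 : Γ ^ 2 * coth ((n:ℝ) * p₁ / Γ) < 0 :=
        mul_neg_of_pos_of_neg (by positivity) hc₁
      have hl2 : lam ^ 2 * (lam / ((n:ℝ) * (p₁ - p₀))) < lam ^ 2 * coth ((n:ℝ) * (p₁ - p₀) / lam) :=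
        (mul_lt_mul_iff_right₀ (by positivity)).mpr hc₂
      linarith [hdisp]
    rw [div_lt_iff₀ hn'] at h2
    have hnΔ : (0:ℝ) < (n:ℝ) * (p₁ - p₀) := mul_pos hn' hΔ
    have h3 : - lam ^ 2 * (lam / ((n:ℝ) * (p₁ - p₀))) * n = - lam ^ 3 / (p₁ - p₀) := by
      field_simp
    rw [h3] at h2
    rw [lt_div_iff₀ hΔ] at h2
    nlinarith
  refine ⟨ne_of_lt hkey, ?_⟩
  have hQf : Q = fun l => 2 * gρ * (p₁ - p₀) / l + Γ ^ 2 - l ^ 2 := funext hQ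
  have hd : HasDerivAt Q
      ((0 * lam - 2 * gρ * (p₁ - p₀) * 1) / lam ^ 2 + 0 - 2 * lam ^ 1) lam := by
    rw [hQf]
    exact (((hasDerivAt_const lam (2 * gρ * (p₁ - p₀))).div (hasDerivAt_id lam)
      hlam.ne').add (hasDerivAt_const lam (Γ ^ 2))).sub (hasDerivAt_pow 2 lam)
  rw [hd.deriv]
  have hlam2 : (0:ℝ) < lam ^ 2 := by positivity
  have heq : (0 * lam - 2 * gρ * (p₁ - p₀) * 1) / lam ^ 2 + 0 - 2 * lam ^ 1
      = (-2 * gρ * (p₁ - p₀) - 2 * lam ^ 3) / lam ^ 2 := by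
    field_simp
    ring
  rw [heq]
  have : 0 < (-2 * gρ * (p₁ - p₀) - 2 * lam ^ 3) / lam ^ 2 := by
    apply div_pos _ hlam2
    nlinarith
  exact ne_of_gt this
end

section
/- Let p₀ < p₁ < 0, g⟦ρ⟧ < 0, and let Γ : [p₁,0] → (0,∞) be continuous. Suppose the size condition g⟦ρ⟧·p₁² + ∫_{p₁}^0 (Γ(p)³ + p²Γ(p)) dp < 0 holds. Then there exist λ > 0 and a function φ : [p₀,0] → ℝ, continuous, continuously differentiable on [p₀,p₁] and on [p₁,0], with φ(p₀) = φ(0) = 0 and φ not identically zero, such that g⟦ρ⟧·φ(p₁)² + ∫_{p₀}^{p₁} λ³ φ′(p)² dp + ∫_{p₁}^0 Γ(p)³ φ′(p)² dp < −(∫_{p₀}^{p₁} λ φ(p)² dp + ∫_{p₁}^0 Γ(p) φ(p)² dp); that is, the Rayleigh quotient ℛ(φ;λ) is strictly less than −1, so the local bifurcation condition inf_{λ>0} ν(λ) < −1 holds. -/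
open Set intervalIntegral Filter Topology

/-!
The trial function `φ` rises linearly from `φ p₀ = 0` to `φ p₁ = p₁` and is the identity on
`[p₁, 0]`. There `φ' = 1` and `φ² = p²`, so the air layer together with `gρ φ(p₁)²` contributes
exactly the size quantity to "numerator + denominator" of the Rayleigh quotient, while the water
layer contributes `λ³ p₁²/(p₁ - p₀) + λ p₁²(p₁ - p₀)/3`, which vanishes as `λ → 0⁺`.
-/

noncomputable def rampToId (p₀ p₁ p : ℝ) : ℝ :=
  if p ≤ p₁ then p₁ / (p₁ - p₀) * (p - p₀) else p

namespace rampToId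

variable {p₀ p₁ p : ℝ}

theorem eq_of_le (hp : p ≤ p₁) : rampToId p₀ p₁ p = p₁ / (p₁ - p₀) * (p - p₀) := if_pos hp

theorem eq_self (h : p₀ ≠ p₁) (hp : p₁ ≤ p) : rampToId p₀ p₁ p = p := by
  rcases hp.lt_or_eq with hp | rfl
  · exact if_neg hp.not_ge
  · rw [eq_of_le le_rfl, div_mul_cancel₀ _ (sub_ne_zero.mpr h.symm)]

theorem apply_left (h : p₀ ≤ p₁) : rampToId p₀ p₁ p₀ = 0 := by
  simp [eq_of_le h]

theorem continuous (h : p₀ ≠ p₁) : Continuous (rampToId p₀ p₁) :=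
  Continuous.if_le (by fun_prop) continuous_id continuous_id continuous_const
    fun _ hp => by rw [hp, div_mul_cancel₀ _ (sub_ne_zero.mpr h.symm)]

theorem contDiffOn_Iic {n : WithTop ℕ∞} : ContDiffOn ℝ n (rampToId p₀ p₁) (Iic p₁) :=
  (contDiff_const.mul (contDiff_id.sub contDiff_const)).contDiffOn.congr fun _ hp => eq_of_le hp

theorem contDiffOn_Ici {n : WithTop ℕ∞} (h : p₀ ≠ p₁) :
    ContDiffOn ℝ n (rampToId p₀ p₁) (Ici p₁) :=
  contDiff_id.contDiffOn.congr fun _ hp => eq_self h hp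

theorem deriv_of_lt (hp : p < p₁) : deriv (rampToId p₀ p₁) p = p₁ / (p₁ - p₀) := by
  have hloc : rampToId p₀ p₁ =ᶠ[𝓝 p] fun q => p₁ / (p₁ - p₀) * (q - p₀) :=
    eventually_of_mem (Iio_mem_nhds hp) fun _ hq => eq_of_le (le_of_lt hq)
  rw [hloc.deriv_eq]
  simp

theorem deriv_of_gt (hp : p₁ < p) : deriv (rampToId p₀ p₁) p = 1 := by
  have hloc : rampToId p₀ p₁ =ᶠ[𝓝 p] id :=
    eventually_of_mem (Ioi_mem_nhds hp) fun _ hq => if_neg (not_le.mpr hq)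
  rw [hloc.deriv_eq, deriv_id]

theorem integral_deriv_sq_left (h : p₀ ≤ p₁) :
    ∫ p in p₀..p₁, deriv (rampToId p₀ p₁) p ^ 2 = p₁ ^ 2 / (p₁ - p₀) := by
  have hae : ∀ᵐ p, p ∈ uIoc p₀ p₁ → deriv (rampToId p₀ p₁) p ^ 2 = (p₁ / (p₁ - p₀)) ^ 2 := by
    filter_upwards [MeasureTheory.volume.ae_ne p₁] with p hne hp
    rw [uIoc_of_le h] at hp
    rw [deriv_of_lt (lt_of_le_of_ne hp.2 hne)]
  rw [integral_congr_ae hae, integral_const, smul_eq_mul]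
  rcases h.eq_or_lt with rfl | h
  · simp
  · field_simp [(sub_pos.mpr h).ne']

theorem integral_sq_left (h : p₀ ≤ p₁) :
    ∫ p in p₀..p₁, rampToId p₀ p₁ p ^ 2 = p₁ ^ 2 * (p₁ - p₀) / 3 := by
  have hline : EqOn (fun p => rampToId p₀ p₁ p ^ 2)
      (fun p => (p₁ / (p₁ - p₀)) ^ 2 * (p - p₀) ^ 2) (uIcc p₀ p₁) := fun p hp => by
    rw [uIcc_of_le h] at hp
    simp only [eq_of_le hp.2]
    ring
  rw [integral_congr hline, integral_const_mul, integral_comp_sub_right (· ^ 2), integral_pow]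
  rcases h.eq_or_lt with rfl | h
  · simp
  · field_simp [(sub_pos.mpr h).ne']
    ring

theorem integral_mul_deriv_sq_right {b : ℝ} (f : ℝ → ℝ) (hb : p₁ ≤ b) :
    ∫ p in p₁..b, f p * deriv (rampToId p₀ p₁) p ^ 2 = ∫ p in p₁..b, f p := by
  refine integral_congr_ae (.of_forall fun p hp => ?_)
  rw [uIoc_of_le hb] at hp
  rw [deriv_of_gt hp.1, one_pow, mul_one]

theorem integral_mul_sq_right {b : ℝ} (f : ℝ → ℝ) (h : p₀ ≠ p₁) (hb : p₁ ≤ b) :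
    ∫ p in p₁..b, f p * rampToId p₀ p₁ p ^ 2 = ∫ p in p₁..b, p ^ 2 * f p := by
  refine integral_congr fun p hp => ?_
  rw [uIcc_of_le hb] at hp
  simp only [eq_self h hp.1]
  ring

end rampToId

theorem exists_pos_cube_mul_add_mul_lt (A B : ℝ) {ε : ℝ} (hε : 0 < ε) :
    ∃ lam > 0, lam ^ 3 * A + lam * B < ε := by
  have hlim : Tendsto (fun l : ℝ => l ^ 3 * A + l * B) (𝓝[>] 0) (𝓝 0) := by
    have := (by fun_prop : Continuous fun l : ℝ => l ^ 3 * A + l * B).tendsto 0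
    simpa using this.mono_left nhdsWithin_le_nhds
  obtain ⟨lam, hsmall, hpos⟩ :=
    ((hlim.eventually (gt_mem_nhds hε)).and self_mem_nhdsWithin).exists
  exact ⟨lam, hpos, hsmall⟩

theorem stmt_11_general (p₀ p₁ gρ : ℝ) (h₀₁ : p₀ < p₁) (h₁ : p₁ < 0)
    (Γ : ℝ → ℝ)
    (hΓcont : ContinuousOn Γ (Set.Icc p₁ 0))
    (hsize : gρ * p₁ ^ 2 + (∫ p in p₁..(0 : ℝ), (Γ p ^ 3 + p ^ 2 * Γ p)) < 0) :
    ∃ lam > (0 : ℝ), ∃ φ : ℝ → ℝ,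
      ContinuousOn φ (Set.Icc p₀ 0) ∧
      ContDiffOn ℝ 1 φ (Set.Icc p₀ p₁) ∧
      ContDiffOn ℝ 1 φ (Set.Icc p₁ 0) ∧
      φ p₀ = 0 ∧ φ 0 = 0 ∧
      ¬(∀ p ∈ Set.Icc p₀ 0, φ p = 0) ∧
      gρ * φ p₁ ^ 2 + (∫ p in p₀..p₁, lam ^ 3 * deriv φ p ^ 2)
          + (∫ p in p₁..(0 : ℝ), Γ p ^ 3 * deriv φ p ^ 2)
        < -((∫ p in p₀..p₁, lam * φ p ^ 2) + ∫ p in p₁..(0 : ℝ), Γ p * φ p ^ 2) := by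
  have hIcc : uIcc p₁ 0 = Icc p₁ 0 := uIcc_of_le h₁.le
  rw [integral_add ((hIcc ▸ hΓcont.pow 3).intervalIntegrable)
    ((hIcc ▸ (continuousOn_id.pow 2).mul hΓcont).intervalIntegrable)] at hsize
  obtain ⟨lam, hlam, hsmall⟩ := exists_pos_cube_mul_add_mul_lt
    (p₁ ^ 2 / (p₁ - p₀)) (p₁ ^ 2 * (p₁ - p₀) / 3) (neg_pos.mpr hsize)
  refine ⟨lam, hlam, rampToId p₀ p₁, (rampToId.continuous h₀₁.ne).continuousOn,
    rampToId.contDiffOn_Iic.mono Icc_subset_Iic_self,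
    (rampToId.contDiffOn_Ici h₀₁.ne).mono Icc_subset_Ici_self, rampToId.apply_left h₀₁.le,
    rampToId.eq_self h₀₁.ne h₁.le, fun hzero => h₁.ne ?_, ?_⟩
  · rw [← rampToId.eq_self h₀₁.ne le_rfl, hzero p₁ ⟨h₀₁.le, h₁.le⟩]
  · rw [integral_const_mul, integral_const_mul, rampToId.integral_deriv_sq_left h₀₁.le,
      rampToId.integral_sq_left h₀₁.le, rampToId.integral_mul_deriv_sq_right _ h₁.le,
      rampToId.integral_mul_sq_right _ h₀₁.ne h₁.le, rampToId.eq_self h₀₁.ne le_rfl]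
    linarith

/-- **The size condition implies the local bifurcation condition.**
Let `p₀ < p₁ < 0`, `gρ < 0`, and let `Γ : [p₁,0] → (0,∞)` be continuous with
`gρ·p₁² + ∫_{p₁}^0 (Γ³ + p²Γ) dp < 0`.  Then there exist `λ > 0` and an
admissible `φ` (continuous on `[p₀,0]`, `C¹` on `[p₀,p₁]` and on `[p₁,0]`,
vanishing at `p₀` and `0`, not identically zero) whose Rayleigh quotient at `λ`
is strictly less than `−1`; hence `inf_{λ>0} ν(λ) < −1`. -/
theorem stmt_11 (p₀ p₁ gρ : ℝ) (h₀₁ : p₀ < p₁) (h₁ : p₁ < 0) (hgρ : gρ < 0)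
    (Γ : ℝ → ℝ) (hΓpos : ∀ p ∈ Set.Icc p₁ 0, 0 < Γ p)
    (hΓcont : ContinuousOn Γ (Set.Icc p₁ 0))
    (hsize : gρ * p₁ ^ 2 + (∫ p in p₁..(0 : ℝ), (Γ p ^ 3 + p ^ 2 * Γ p)) < 0) :
    ∃ lam > (0 : ℝ), ∃ φ : ℝ → ℝ,
      ContinuousOn φ (Set.Icc p₀ 0) ∧
      ContDiffOn ℝ 1 φ (Set.Icc p₀ p₁) ∧
      ContDiffOn ℝ 1 φ (Set.Icc p₁ 0) ∧
      φ p₀ = 0 ∧ φ 0 = 0 ∧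
      ¬(∀ p ∈ Set.Icc p₀ 0, φ p = 0) ∧
      gρ * φ p₁ ^ 2 + (∫ p in p₀..p₁, lam ^ 3 * deriv φ p ^ 2)
          + (∫ p in p₁..(0 : ℝ), Γ p ^ 3 * deriv φ p ^ 2)
        < -((∫ p in p₀..p₁, lam * φ p ^ 2) + ∫ p in p₁..(0 : ℝ), Γ p * φ p ^ 2) :=
  stmt_11_general p₀ p₁ gρ h₀₁ h₁ Γ hΓcont hsize
end

section
/- Let p₀ < p₁ < 0, g⟦ρ⟧ < 0, let Γ : [p₁,0] → (0,∞) be continuous, and set λ₀ := (−g⟦ρ⟧(p₁−p₀))^{1/3}. Then for every φ : [p₀,0] → ℝ that is continuous, continuously differentiable on [p₀,p₁] and on [p₁,0], and satisfies φ(p₀) = 0, one has g⟦ρ⟧·φ(p₁)² + ∫_{p₀}^{p₁} λ₀³ φ′(p)² dp + ∫_{p₁}^0 Γ(p)³ φ′(p)² dp ≥ 0. Consequently the Rayleigh quotient ℛ(φ;λ₀) is nonnegative for every nontrivial admissible φ; in particular the minimizing eigenvalue ν(λ₀) is ≥ 0, so the bifurcation value λ* (where ν(λ*) = −1) never equals λ₀.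 -/
/-!
Since `φ(p₀) = 0`, the fundamental theorem of calculus and Cauchy–Schwarz give the trace
inequality `φ(p₁)² ≤ (p₁ - p₀) ∫_{p₀}^{p₁} φ′²`. The choice `λ₀³ = -g⟦ρ⟧(p₁ - p₀)` is exactly
the one for which the water integral absorbs the negative interface term `g⟦ρ⟧ φ(p₁)²`; the air
integral and the denominator of the Rayleigh quotient are integrals of nonnegative functions.
-/

open Set intervalIntegral

theorem sq_intervalIntegral_le_mul_integral_sq {f : ℝ → ℝ} {a b : ℝ} (hab : a ≤ b)
    (hf : IntervalIntegrable f MeasureTheory.volume a b)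
    (hf2 : IntervalIntegrable (fun x => f x ^ 2) MeasureTheory.volume a b) :
    (∫ x in a..b, f x) ^ 2 ≤ (b - a) * ∫ x in a..b, f x ^ 2 := by
  rcases hab.eq_or_lt with rfl | hlt
  · simp
  set I := ∫ x in a..b, f x
  set J := ∫ x in a..b, f x ^ 2
  set L := b - a
  have hL : 0 < L := sub_pos.2 hlt
  have hexpand : ∫ x in a..b, (L * f x - I) ^ 2 = L * (L * J - I ^ 2) := by
    have hsq : ∀ x, (L * f x - I) ^ 2 = L ^ 2 * f x ^ 2 - 2 * L * I * f x + I ^ 2 := fun x => by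
      ring
    simp_rw [hsq]
    rw [integral_add ((hf2.const_mul _).sub (hf.const_mul _)) intervalIntegrable_const,
      integral_sub (hf2.const_mul _) (hf.const_mul _), integral_const_mul, integral_const_mul,
      integral_const, smul_eq_mul]
    ring
  have hnonneg : 0 ≤ ∫ x in a..b, (L * f x - I) ^ 2 :=
    integral_nonneg hab fun x _ => sq_nonneg _
  rw [hexpand] at hnonneg
  exact sub_nonneg.1 ((mul_nonneg_iff_of_pos_left hL).1 hnonneg)

theorem sq_le_mul_integral_deriv_sq {φ : ℝ → ℝ} {a b : ℝ} (hab : a ≤ b)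
    (hφ : ContDiffOn ℝ 1 φ (Icc a b)) (ha : φ a = 0) :
    φ b ^ 2 ≤ (b - a) * ∫ x in a..b, deriv φ x ^ 2 := by
  rcases hab.eq_or_lt with rfl | hlt
  · simp [ha]
  have hcont : ContinuousOn (derivWithin φ (Icc a b)) (Icc a b) :=
    hφ.continuousOn_derivWithin (uniqueDiffOn_Icc hlt) le_rfl
  have hderiv : EqOn (derivWithin φ (Icc a b)) (deriv φ) (uIoo a b) := fun x hx => by
    rw [uIoo_of_le hab] at hx
    exact derivWithin_of_mem_nhds (Icc_mem_nhds hx.1 hx.2)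
  have hint : IntervalIntegrable (deriv φ) MeasureTheory.volume a b :=
    (hcont.intervalIntegrable_of_Icc hab).congr_uIoo hderiv
  have hint2 : IntervalIntegrable (fun x => deriv φ x ^ 2) MeasureTheory.volume a b :=
    ((hcont.pow 2).intervalIntegrable_of_Icc hab).congr_uIoo fun x hx =>
      congrArg (· ^ 2) (hderiv hx)
  calc φ b ^ 2 = (∫ x in a..b, deriv φ x) ^ 2 := by
        rw [integral_deriv_of_contDiffOn_Icc hφ hab, ha, sub_zero]
    _ ≤ (b - a) * ∫ x in a..b, deriv φ x ^ 2 :=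
        sq_intervalIntegral_le_mul_integral_sq hab hint hint2

theorem stmt_12_general (p₀ p₁ gρ : ℝ) (h₀₁ : p₀ < p₁) (h₁ : p₁ < 0) (hgρ : gρ < 0)
    (Γ : ℝ → ℝ) (hΓpos : ∀ p ∈ Set.Icc p₁ 0, 0 < Γ p)
    (lam₀ : ℝ) (hlam₀ : lam₀ = (-gρ * (p₁ - p₀)) ^ ((1 : ℝ) / 3)) :
    (∀ φ : ℝ → ℝ,
      ContinuousOn φ (Set.Icc p₀ 0) →
      ContDiffOn ℝ 1 φ (Set.Icc p₀ p₁) →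
      ContDiffOn ℝ 1 φ (Set.Icc p₁ 0) →
      φ p₀ = 0 →
      0 ≤ gρ * φ p₁ ^ 2 + (∫ p in p₀..p₁, lam₀ ^ 3 * deriv φ p ^ 2)
          + ∫ p in p₁..(0 : ℝ), Γ p ^ 3 * deriv φ p ^ 2) ∧
    (∀ φ : ℝ → ℝ,
      ContinuousOn φ (Set.Icc p₀ 0) →
      ContDiffOn ℝ 1 φ (Set.Icc p₀ p₁) →
      ContDiffOn ℝ 1 φ (Set.Icc p₁ 0) →
      φ p₀ = 0 → φ 0 = 0 → ¬(∀ p ∈ Set.Icc p₀ 0, φ p = 0) →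
      0 ≤ (gρ * φ p₁ ^ 2 + (∫ p in p₀..p₁, lam₀ ^ 3 * deriv φ p ^ 2)
            + ∫ p in p₁..(0 : ℝ), Γ p ^ 3 * deriv φ p ^ 2)
          / ((∫ p in p₀..p₁, lam₀ * φ p ^ 2) + ∫ p in p₁..(0 : ℝ), Γ p * φ p ^ 2)) := by
  have hpos : 0 < -gρ * (p₁ - p₀) := mul_pos (neg_pos.2 hgρ) (sub_pos.2 h₀₁)
  have hlam_pos : 0 < lam₀ := hlam₀ ▸ Real.rpow_pos_of_pos hpos _
  have hlam_cube : lam₀ ^ 3 = -gρ * (p₁ - p₀) := by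
    rw [hlam₀, one_div]
    exact_mod_cast Real.rpow_inv_natCast_pow hpos.le three_ne_zero
  have hnum : ∀ φ : ℝ → ℝ, ContDiffOn ℝ 1 φ (Icc p₀ p₁) → φ p₀ = 0 →
      0 ≤ gρ * φ p₁ ^ 2 + (∫ p in p₀..p₁, lam₀ ^ 3 * deriv φ p ^ 2)
          + ∫ p in p₁..(0 : ℝ), Γ p ^ 3 * deriv φ p ^ 2 := by
    intro φ hφ hφ₀
    have htrace := sq_le_mul_integral_deriv_sq h₀₁.le hφ hφ₀
    have hair : 0 ≤ ∫ p in p₁..(0 : ℝ), Γ p ^ 3 * deriv φ p ^ 2 :=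
      integral_nonneg h₁.le fun p hp => by have := hΓpos p hp; positivity
    rw [integral_const_mul, hlam_cube]
    nlinarith [mul_le_mul_of_nonpos_left htrace hgρ.le]
  refine ⟨fun φ _ hφ _ hφ₀ => hnum φ hφ hφ₀, fun φ _ hφ _ hφ₀ _ _ => ?_⟩
  refine div_nonneg (hnum φ hφ hφ₀) (add_nonneg ?_ ?_)
  · exact integral_nonneg h₀₁.le fun p _ => by positivity
  · exact integral_nonneg h₁.le fun p hp => by have := hΓpos p hp; positivity

/-- **Nonnegativity of the Rayleigh quotient at `λ₀`.**
Let `p₀ < p₁ < 0`, `gρ < 0`, `Γ : [p₁,0] → (0,∞)` continuous, and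
`λ₀ = (−gρ(p₁−p₀))^(1/3)`.  For every `φ` that is continuous on `[p₀,0]`, `C¹`
on `[p₀,p₁]` and on `[p₁,0]` with `φ(p₀) = 0`, the quantity
`gρ·φ(p₁)² + ∫_{p₀}^{p₁} λ₀³φ′² + ∫_{p₁}^0 Γ³φ′²` is nonnegative; consequently
the Rayleigh quotient `ℛ(φ;λ₀)` is nonnegative for every nontrivial admissible
`φ`, so the bifurcation value `λ*` (where `ν(λ*) = −1`) never equals `λ₀`. -/
theorem stmt_12 (p₀ p₁ gρ : ℝ) (h₀₁ : p₀ < p₁) (h₁ : p₁ < 0) (hgρ : gρ < 0)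
    (Γ : ℝ → ℝ) (hΓpos : ∀ p ∈ Set.Icc p₁ 0, 0 < Γ p)
    (hΓcont : ContinuousOn Γ (Set.Icc p₁ 0))
    (lam₀ : ℝ) (hlam₀ : lam₀ = (-gρ * (p₁ - p₀)) ^ ((1 : ℝ) / 3)) :
    (∀ φ : ℝ → ℝ,
      ContinuousOn φ (Set.Icc p₀ 0) →
      ContDiffOn ℝ 1 φ (Set.Icc p₀ p₁) →
      ContDiffOn ℝ 1 φ (Set.Icc p₁ 0) →
      φ p₀ = 0 →
      0 ≤ gρ * φ p₁ ^ 2 + (∫ p in p₀..p₁, lam₀ ^ 3 * deriv φ p ^ 2)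
          + ∫ p in p₁..(0 : ℝ), Γ p ^ 3 * deriv φ p ^ 2) ∧
    (∀ φ : ℝ → ℝ,
      ContinuousOn φ (Set.Icc p₀ 0) →
      ContDiffOn ℝ 1 φ (Set.Icc p₀ p₁) →
      ContDiffOn ℝ 1 φ (Set.Icc p₁ 0) →
      φ p₀ = 0 → φ 0 = 0 → ¬(∀ p ∈ Set.Icc p₀ 0, φ p = 0) →
      0 ≤ (gρ * φ p₁ ^ 2 + (∫ p in p₀..p₁, lam₀ ^ 3 * deriv φ p ^ 2)
            + ∫ p in p₁..(0 : ℝ), Γ p ^ 3 * deriv φ p ^ 2)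
          / ((∫ p in p₀..p₁, lam₀ * φ p ^ 2) + ∫ p in p₁..(0 : ℝ), Γ p * φ p ^ 2)) :=
  stmt_12_general p₀ p₁ gρ h₀₁ h₁ hgρ Γ hΓpos lam₀ hlam₀
end

section
/- Let p₀ < p₁ < 0, g⟦ρ⟧ < 0, λ > 0, and let Γ : [p₁,0] → (0,∞) be continuously differentiable. Consider the zero-mode linearized problem with atmospheric vorticity: find M : [p₀,0] → ℝ continuous, twice continuously differentiable on [p₀,p₁] and on [p₁,0], such that (Γ³M′)′ = 0 on (p₁,0), M″ = 0 on (p₀,p₁), M(p₀) = 0, M(0) = M(p₁), and Γ(p₁)³M′(p₁⁺) − λ³M′(p₁⁻) = g⟦ρ⟧M(p₁). Then this problem has a solution that is not identically zero if and only if λ³ = −g⟦ρ⟧(p₁−p₀). -/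
open Set

/-! The left piece of a solution is affine, `M p = c (p - p₀)`, and on the right piece
`Γ³M′` is a constant `k`; by the mean value theorem `M′` vanishes somewhere on `(p₁, 0)`
because `M(0) = M(p₁)`, so `k = 0` and `M` is constant there. The jump condition at `p₁`
then reads `-λ³ c = g⟦ρ⟧ c (p₁ - p₀)`, and a nonzero solution needs `c ≠ 0`.
Conversely, the ramp `min p p₁ - p₀` solves the problem when
`λ³ = -g⟦ρ⟧ (p₁ - p₀)`. -/

section Interval

variable {f : ℝ → ℝ} {a b : ℝ}

theorem eq_left_of_deriv_eq_zero (hf : ContinuousOn f (Icc a b))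
    (hfd : DifferentiableOn ℝ f (Ioo a b)) (hf' : ∀ x ∈ Ioo a b, deriv f x = 0) :
    ∀ x ∈ Icc a b, f x = f a := by
  rintro x ⟨hax, hxb⟩
  rcases hax.eq_or_lt with rfl | hax
  · rfl
  obtain ⟨ξ, hξ, hslope⟩ := exists_deriv_eq_slope f hax (hf.mono (Icc_subset_Icc_right hxb))
    (hfd.mono (Ioo_subset_Ioo_right hxb))
  rw [hf' ξ ⟨hξ.1, hξ.2.trans_le hxb⟩, eq_comm, div_eq_zero_iff, sub_eq_zero] at hslope
  exact hslope.resolve_right (sub_ne_zero.2 hax.ne')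

theorem ContDiffOn.differentiableOn_deriv_Ioo (hf : ContDiffOn ℝ 2 f (Icc a b)) :
    DifferentiableOn ℝ (deriv f) (Ioo a b) :=
  ((hf.mono Ioo_subset_Icc_self).deriv_of_isOpen (m := 1) isOpen_Ioo
    (by norm_num)).differentiableOn one_ne_zero

theorem ContDiffOn.differentiableOn_Ioo (hf : ContDiffOn ℝ 2 f (Icc a b)) :
    DifferentiableOn ℝ f (Ioo a b) :=
  (hf.differentiableOn (by norm_num)).mono Ioo_subset_Icc_self

theorem derivWithin_Icc_right_of_eqOn_affine (hab : a < b) {c : ℝ}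
    (hf : ∀ x ∈ Icc a b, f x = f a + c * (x - a)) : derivWithin f (Icc a b) b = c := by
  have hline : HasDerivAt (fun x => f a + c * (x - a)) c b := by
    simpa using ((hasDerivAt_id b).sub_const a).const_mul c |>.const_add (f a)
  rw [derivWithin_congr hf (hf b (right_mem_Icc.2 hab.le))]
  exact hline.hasDerivWithinAt.derivWithin (uniqueDiffOn_Icc hab b (right_mem_Icc.2 hab.le))

theorem eq_affine_of_deriv_deriv_eq_zero (hab : a < b) (hf : ContDiffOn ℝ 2 f (Icc a b))
    (hf'' : ∀ x ∈ Ioo a b, deriv (deriv f) x = 0) :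
    ∀ x ∈ Icc a b, f x = f a + derivWithin f (Icc a b) b * (x - a) := by
  obtain ⟨c, hc⟩ := isOpen_Ioo.exists_is_const_of_deriv_eq_zero isPreconnected_Ioo
    hf.differentiableOn_deriv_Ioo hf''
  have hline : ∀ x ∈ Icc a b, f x - c * (x - a) = f a - c * (a - a) :=
    eq_left_of_deriv_eq_zero (hf.continuousOn.sub (by fun_prop))
      (hf.differentiableOn_Ioo.sub (by fun_prop)) fun x hx => by
        have hfx := ((hf.differentiableOn_Ioo x hx).differentiableAt
          (isOpen_Ioo.mem_nhds hx)).hasDerivAt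
        rw [hc x hx] at hfx
        refine HasDerivAt.deriv ?_
        convert hfx.sub (((hasDerivAt_id x).sub_const a).const_mul c) using 1
        · rfl
        · ring
  have haff : ∀ x ∈ Icc a b, f x = f a + c * (x - a) := fun x hx => by
    linarith [hline x hx]
  rwa [derivWithin_Icc_right_of_eqOn_affine hab haff]

theorem eq_left_of_deriv_weight_mul_deriv_eq_zero (hab : a < b) {w : ℝ → ℝ}
    (hw : DifferentiableOn ℝ w (Ioo a b)) (hw0 : ∀ x ∈ Ioo a b, w x ≠ 0)
    (hf : ContDiffOn ℝ 2 f (Icc a b))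
    (hwf : ∀ x ∈ Ioo a b, deriv (fun y => w y * deriv f y) x = 0) (hfab : f b = f a) :
    ∀ x ∈ Icc a b, f x = f a := by
  obtain ⟨k, hk⟩ := isOpen_Ioo.exists_is_const_of_deriv_eq_zero isPreconnected_Ioo
    (hw.mul hf.differentiableOn_deriv_Ioo) hwf
  obtain ⟨ξ, hξ, hslope⟩ :=
    exists_deriv_eq_slope f hab hf.continuousOn hf.differentiableOn_Ioo
  have hk0 : k = 0 := by
    rw [← hk ξ hξ, Pi.mul_apply, hslope, hfab, sub_self, zero_div, mul_zero]
  refine eq_left_of_deriv_eq_zero hf.continuousOn hf.differentiableOn_Ioo fun x hx => ?_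
  have hwx := hk x hx
  rw [hk0, Pi.mul_apply, mul_eq_zero] at hwx
  exact hwx.resolve_left (hw0 x hx)

end Interval

section Ramp

variable {a b x : ℝ}

theorem deriv_min_sub_of_lt (hx : x < b) : deriv (fun q => min q b - a) x = 1 := by
  have hev : (fun q => min q b - a) =ᶠ[nhds x] fun q => q - a := by
    filter_upwards [Iio_mem_nhds hx] with y hy
    rw [min_eq_left hy.le]
  rw [hev.deriv_eq]
  simp

theorem deriv_min_sub_of_gt (hx : b < x) : deriv (fun q => min q b - a) x = 0 := by
  have hev : (fun q => min q b - a) =ᶠ[nhds x] fun _ => b - a := by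
    filter_upwards [Ioi_mem_nhds hx] with y hy
    rw [min_eq_right hy.le]
  rw [hev.deriv_eq, deriv_const]

theorem derivWithin_min_sub_Icc_left {c : ℝ} (hcb : c < b) :
    derivWithin (fun q => min q b - a) (Icc c b) b = 1 :=
  derivWithin_Icc_right_of_eqOn_affine hcb fun q hq => by
    simp only [min_eq_left hq.2, min_eq_left hcb.le]
    ring

theorem derivWithin_min_sub_Icc_right {c : ℝ} :
    derivWithin (fun q => min q b - a) (Icc b c) b = 0 := by
  rw [derivWithin_congr (f := fun _ => b - a) (fun q hq => by simp [min_eq_right hq.1])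
    (by simp), derivWithin_fun_const, Pi.zero_apply]

theorem deriv_deriv_min_sub_of_lt (hx : x < b) : deriv (deriv fun q => min q b - a) x = 0 := by
  have hev : deriv (fun q => min q b - a) =ᶠ[nhds x] fun _ => 1 := by
    filter_upwards [Iio_mem_nhds hx] with q hq using deriv_min_sub_of_lt hq
  rw [hev.deriv_eq, deriv_const]

theorem deriv_mul_deriv_min_sub_of_gt (w : ℝ → ℝ) (hx : b < x) :
    deriv (fun y => w y * deriv (fun q => min q b - a) y) x = 0 := by
  have hev : (fun y => w y * deriv (fun q => min q b - a) y) =ᶠ[nhds x] fun _ => 0 := by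
    filter_upwards [Ioi_mem_nhds hx] with q hq
    rw [deriv_min_sub_of_gt hq, mul_zero]
  rw [hev.deriv_eq, deriv_const]

theorem contDiffOn_min_sub_Icc_left {c : ℝ} {n : WithTop ℕ∞} :
    ContDiffOn ℝ n (fun q => min q b - a) (Icc c b) :=
  (contDiffOn_id.sub (contDiffOn_const (c := a))).congr fun q hq => by simp [min_eq_left hq.2]

theorem contDiffOn_min_sub_Icc_right {c : ℝ} {n : WithTop ℕ∞} :
    ContDiffOn ℝ n (fun q => min q b - a) (Icc b c) :=
  (contDiffOn_const (c := b - a)).congr fun q hq => by simp [min_eq_right hq.1]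

end Ramp

theorem stmt_18_general (p₀ p₁ gρ lam : ℝ) (h₀₁ : p₀ < p₁) (h₁ : p₁ < 0)
    (Γ : ℝ → ℝ) (hΓpos : ∀ p ∈ Set.Icc p₁ 0, 0 < Γ p)
    (hΓC1 : ContDiffOn ℝ 1 Γ (Set.Icc p₁ 0)) :
    (∃ M : ℝ → ℝ,
      (ContinuousOn M (Set.Icc p₀ 0) ∧
        ContDiffOn ℝ 2 M (Set.Icc p₀ p₁) ∧
        ContDiffOn ℝ 2 M (Set.Icc p₁ 0) ∧
        (∀ p ∈ Set.Ioo p₁ (0 : ℝ), deriv (fun p' => Γ p' ^ 3 * deriv M p') p = 0) ∧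
        (∀ p ∈ Set.Ioo p₀ p₁, deriv (deriv M) p = 0) ∧
        M p₀ = 0 ∧ M 0 = M p₁ ∧
        Γ p₁ ^ 3 * derivWithin M (Set.Icc p₁ 0) p₁
          - lam ^ 3 * derivWithin M (Set.Icc p₀ p₁) p₁ = gρ * M p₁) ∧
      ¬(∀ p ∈ Set.Icc p₀ 0, M p = 0)) ↔
    lam ^ 3 = -gρ * (p₁ - p₀) := by
  constructor
  · rintro ⟨M, ⟨-, hC2L, hC2R, hodeR, hodeL, hM0, hMtop, hjump⟩, hM⟩
    have hleft := eq_affine_of_deriv_deriv_eq_zero h₀₁ hC2L hodeL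
    set c := derivWithin M (Icc p₀ p₁) p₁
    have hright : ∀ p ∈ Icc p₁ 0, M p = M p₁ :=
      eq_left_of_deriv_weight_mul_deriv_eq_zero h₁
        (((hΓC1.differentiableOn one_ne_zero).mono Ioo_subset_Icc_self).pow 3)
        (fun p hp => pow_ne_zero 3 (hΓpos p (Ioo_subset_Icc_self hp)).ne') hC2R hodeR hMtop
    have hMp₁ : M p₁ = c * (p₁ - p₀) := by
      rw [hleft p₁ (right_mem_Icc.2 h₀₁.le), hM0, zero_add]
    have hc : c ≠ 0 := by
      intro hc
      refine hM fun p hp => ?_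
      rcases le_total p p₁ with hpp₁ | hpp₁
      · rw [hleft p ⟨hp.1, hpp₁⟩, hM0, hc, zero_mul, zero_add]
      · rw [hright p ⟨hpp₁, hp.2⟩, hMp₁, hc, zero_mul]
    rw [derivWithin_congr hright rfl, derivWithin_fun_const, Pi.zero_apply, hMp₁] at hjump
    apply mul_right_cancel₀ hc
    linear_combination -hjump
  · intro hlam
    refine ⟨fun p => min p p₁ - p₀, ⟨by fun_prop, contDiffOn_min_sub_Icc_left,
      contDiffOn_min_sub_Icc_right, fun p hp => deriv_mul_deriv_min_sub_of_gt _ hp.1,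
      fun p hp => deriv_deriv_min_sub_of_lt hp.2, by simp [h₀₁.le], by simp [h₁.le], ?_⟩,
      fun hM => ?_⟩
    · rw [derivWithin_min_sub_Icc_right, derivWithin_min_sub_Icc_left h₀₁, hlam]
      simp only [min_self]
      ring
    · have hMp₁ : p₁ - p₀ = 0 := by simpa using hM p₁ ⟨h₀₁.le, h₁.le⟩
      exact h₀₁.ne' (sub_eq_zero.1 hMp₁)

/-- **Zero mode of the linearized problem with atmospheric vorticity.**
Let `p₀ < p₁ < 0`, `gρ < 0`, `λ > 0`, and let `Γ : [p₁,0] → (0,∞)` be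
continuously differentiable.  The problem of finding `M : [p₀,0] → ℝ`
continuous, twice continuously differentiable on `[p₀,p₁]` and on `[p₁,0]`,
with `(Γ³M′)′ = 0` on `(p₁,0)`, `M″ = 0` on `(p₀,p₁)`, `M(p₀) = 0`,
`M(0) = M(p₁)` and `Γ(p₁)³M′(p₁⁺) − λ³M′(p₁⁻) = gρ·M(p₁)` has a solution that is
not identically zero if and only if `λ³ = −gρ(p₁−p₀)`. -/
theorem stmt_18 (p₀ p₁ gρ lam : ℝ) (h₀₁ : p₀ < p₁) (h₁ : p₁ < 0)
    (hgρ : gρ < 0) (hlam : 0 < lam)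
    (Γ : ℝ → ℝ) (hΓpos : ∀ p ∈ Set.Icc p₁ 0, 0 < Γ p)
    (hΓC1 : ContDiffOn ℝ 1 Γ (Set.Icc p₁ 0)) :
    (∃ M : ℝ → ℝ,
      (ContinuousOn M (Set.Icc p₀ 0) ∧
        ContDiffOn ℝ 2 M (Set.Icc p₀ p₁) ∧
        ContDiffOn ℝ 2 M (Set.Icc p₁ 0) ∧
        (∀ p ∈ Set.Ioo p₁ (0 : ℝ), deriv (fun p' => Γ p' ^ 3 * deriv M p') p = 0) ∧
        (∀ p ∈ Set.Ioo p₀ p₁, deriv (deriv M) p = 0) ∧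
        M p₀ = 0 ∧ M 0 = M p₁ ∧
        Γ p₁ ^ 3 * derivWithin M (Set.Icc p₁ 0) p₁
          - lam ^ 3 * derivWithin M (Set.Icc p₀ p₁) p₁ = gρ * M p₁) ∧
      ¬(∀ p ∈ Set.Icc p₀ 0, M p = 0)) ↔
    lam ^ 3 = -gρ * (p₁ - p₀) :=
  stmt_18_general p₀ p₁ gρ lam h₀₁ h₁ Γ hΓpos hΓC1
end
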